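/- Let F be a field, n ≥ 1, s = s_0,…,s_{1-n} over F with linear complexity L satisfying 2L ≤ n. Let (μ, μ') be the output pair of the minimal-solution algorithm with μ_2 μ'_1 − μ_1 μ'_2 = ∇_s ≠ 0. Suppose f = (f_1, f_2) is a solution for s with deg f_1 ≤ n − L and gcd(f_1, f_2) = 1. Then f_1 is a minimal polynomial of s (deg f_1 = L); in fact ∇_s f = m' μ with m' ∈ F^×, where m' = f_2 μ'_1 − f_1 μ'_2. -/

import Mathlib

open Polynomial in
/-- φ of degree d satisfies the annihilating condition for the length-`n` sequence
`s₀, s₋₁, …, s₁₋ₙ` (where `s k` denotes `s₋ₖ`). -/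
def AnnCond {D : Type*} [CommRing D] (n : ℕ) (s : ℕ → D) (φ : Polynomial D) : Prop :=
  ∀ t : ℕ, t + φ.natDegree + 1 ≤ n →
    ∑ j ∈ Finset.range (φ.natDegree + 1), φ.coeff j * s (t + j) = 0

/-- φ is a nonzero annihilating polynomial of the length-`n` sequence `s`. -/
def Annihilates {D : Type*} [CommRing D] (n : ℕ) (s : ℕ → D) (φ : Polynomial D) : Prop :=
  φ ≠ 0 ∧ AnnCond n s φ

/-- Linear complexity: minimal degree of a nonzero annihilating polynomial. -/
noncomputable def LC {D : Type*} [CommRing D] (n : ℕ) (s : ℕ → D) : ℕ :=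
  sInf {d | ∃ φ : Polynomial D, Annihilates n s φ ∧ φ.natDegree = d}

/-- `x·ψ = [φ·s̄]`, the strictly-positive-degree part of `φ·s̄`, expressed coefficientwise. -/
def SeqNum {D : Type*} [CommRing D] (n : ℕ) (s : ℕ → D) (φ ψ : Polynomial D) : Prop :=
  ∀ k : ℕ, ψ.coeff k = ∑ j ∈ Finset.range (φ.natDegree + 1),
    if k + 1 ≤ j ∧ j - (k + 1) < n then φ.coeff j * s (j - (k + 1)) else 0

/-- `(φ, ψ)` is a solution for the length-`n` sequence `s`. -/
def IsSolution {D : Type*} [CommRing D] (n : ℕ) (s : ℕ → D) (φ ψ : Polynomial D) : Prop :=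
  Annihilates n s φ ∧ SeqNum n s φ ψ
/-- Discrepancy `Δ(φ; s₀,…,s₋ₖ)` of `φ` with respect to the length-`(k+1)` prefix:
the coefficient `(φ·t̄)_{deg φ − k}`. -/
noncomputable def disc {D : Type*} [CommRing D] (s : ℕ → D) (k : ℕ) (φ : Polynomial D) : D :=
  ∑ j ∈ Finset.range (φ.natDegree + 1),
    if φ.natDegree ≤ j + k then φ.coeff j * s (j + k - φ.natDegree) else 0
/-- State of the Berlekamp–Massey-type algorithm (Algorithm 4.1):
current minimal solution `μ`, auxiliary previous solution `μ'`,
previous nonzero discrepancy `Δ'₁`, the integer `e`, and the product `∇` of discrepancies. -/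
structure BMState (D : Type*) [CommRing D] where
  mu : Polynomial D × Polynomial D
  mu' : Polynomial D × Polynomial D
  dp : D
  e : ℤ
  nabla : D

open Polynomial in
/-- One iteration of the algorithm, processing the term `s₋ₖ`. -/
noncomputable def bmStep {D : Type*} [CommRing D] [DecidableEq D]
    (s : ℕ → D) (k : ℕ) (st : BMState D) : BMState D :=
  let Δ := disc s k st.mu.1
  if Δ = 0 then { st with e := st.e + 1 }
  else if st.e ≤ 0 then
    { st with
      mu := (C st.dp * st.mu.1 - C Δ * X ^ (-st.e).toNat * st.mu'.1,
             C st.dp * st.mu.2 - C Δ * X ^ (-st.e).toNat * st.mu'.2),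
      nabla := st.dp * st.nabla,
      e := st.e + 1 }
  else
    { mu := (C st.dp * X ^ st.e.toNat * st.mu.1 - C Δ * st.mu'.1,
             C st.dp * X ^ st.e.toNat * st.mu.2 - C Δ * st.mu'.2),
      mu' := st.mu,
      dp := Δ,
      nabla := Δ * st.nabla,
      e := -st.e + 1 }

/-- Running the algorithm on the first `n` terms `s₀, …, s₁₋ₙ`
starting from `μ = (1,0)`, `μ' = (0,−1)`, `Δ'₁ = 1`, `e = 1`, `∇ = 1`. -/
noncomputable def bmRun {D : Type*} [CommRing D] [DecidableEq D] (s : ℕ → D) : ℕ → BMState D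
  | 0 => ⟨(1, 0), (0, -1), 1, 1, 1⟩
  | (k + 1) => bmStep s k (bmRun s k)

/-!
Write `s̄ = s₀ + s₋₁ x⁻¹ + ⋯ + s₁₋ₙ x¹⁻ⁿ` and call `φ s̄ - x ψ` the defect of `(φ, ψ)`: the
pair is a solution exactly when its defect has no term of degree `> deg φ - n`. For two such
pairs `f`, `g` with `deg f₁ + deg g₁ ≤ n`, the polynomial `x (f₂ g₁ - f₁ g₂)` equals
`f₁ · defect g - g₁ · defect f`, which has no term of positive degree, so `f₂ g₁ = f₁ g₂`.

The algorithm's output `μ` is such a pair with `deg μ₁ ≤ L` (Massey's lemma bounds the jumps of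
the linear complexity), and `μ₂ μ'₁ - μ₁ μ'₂ = ∇ₛ`. Hence `f₂ μ₁ = f₁ μ₂` and, by Cramer's rule,
`∇ₛ f = m' μ` with `m' = f₂ μ'₁ - f₁ μ'₂`. Coprimality of `f₁, f₂` makes `m'` divide `∇ₛ`, so
`m'` is a nonzero constant and `deg f₁ = deg μ₁ ≤ L ≤ deg f₁`.
-/

open Polynomial Finset
open scoped LaurentPolynomial
open LaurentPolynomial (T)

section Defect

variable {R : Type*} [CommRing R]

noncomputable def seqLaurent (n : ℕ) (s : ℕ → R) : R[T;T⁻¹] :=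
  ∑ i ∈ range n, LaurentPolynomial.C (s i) * T (-i)

noncomputable def solutionDefect (n : ℕ) (s : ℕ → R) (φ ψ : R[X]) : R[T;T⁻¹] :=
  toLaurent φ * seqLaurent n s - T 1 * toLaurent ψ

theorem coeff_C_mul_T_mul (a : R) (p c : ℤ) (f : R[T;T⁻¹]) :
    (LaurentPolynomial.C a * T p * f).coeff c = a * f.coeff (c - p) := by
  rw [← LaurentPolynomial.single_eq_C_mul_T, AddMonoidAlgebra.coeff_single_mul_apply]
  congr 2
  ring

theorem coeff_toLaurent_apply (ψ : R[X]) (c : ℤ) :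
    (toLaurent ψ).coeff c = if 0 ≤ c then ψ.coeff c.toNat else 0 := by
  rw [LaurentPolynomial.coeff_toLaurent]
  split_ifs with hc
  · lift c to ℕ using hc
    exact Finsupp.mapDomain_apply (Nat.castEmbedding (R := ℤ)).injective _ c
  · refine Finsupp.mapDomain_of_notMem_range _ _ ?_
    rintro ⟨k, rfl⟩
    exact hc (Int.natCast_nonneg k)

theorem coeff_T_one_mul_toLaurent (ψ : R[X]) (c : ℤ) :
    (T 1 * toLaurent ψ).coeff c = if 0 < c then ψ.coeff (c - 1).toNat else 0 := by
  rw [T, AddMonoidAlgebra.coeff_single_mul_apply, one_mul, coeff_toLaurent_apply]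
  exact if_congr (by omega) (by congr 2; omega) rfl

theorem coeff_toLaurent_mul (φ : R[X]) (f : R[T;T⁻¹]) (c : ℤ) :
    (toLaurent φ * f).coeff c = ∑ j ∈ range (φ.natDegree + 1), φ.coeff j * f.coeff (c - j) := by
  conv_lhs => rw [φ.as_sum_range_C_mul_X_pow]
  simp only [map_sum, toLaurent_C_mul_X_pow, sum_mul, AddMonoidAlgebra.coeff_sum,
    Finsupp.coe_finsetSum, Finset.sum_apply, coeff_C_mul_T_mul]

theorem coeff_seqLaurent (n : ℕ) (s : ℕ → R) (c : ℤ) :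
    (seqLaurent n s).coeff c = if c ≤ 0 ∧ -c < n then s (-c).toNat else 0 := by
  simp only [seqLaurent, AddMonoidAlgebra.coeff_sum, Finsupp.coe_finsetSum, Finset.sum_apply,
    ← LaurentPolynomial.single_eq_C_mul_T, AddMonoidAlgebra.coeff_single, Finsupp.single_apply]
  split_ifs with h
  · rw [sum_eq_single (-c).toNat (fun i _ hi => if_neg (by omega))
      (fun hc => absurd (mem_range.2 (by omega)) hc), if_pos (by omega)]
  · exact sum_eq_zero fun i hi => if_neg (by rw [mem_range] at hi; omega)

theorem coeff_toLaurent_mul_seqLaurent (n : ℕ) (s : ℕ → R) (φ : R[X]) (c : ℤ) :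
    (toLaurent φ * seqLaurent n s).coeff c = ∑ j ∈ range (φ.natDegree + 1),
      if c ≤ j ∧ j - c < n then φ.coeff j * s (j - c).toNat else 0 := by
  rw [coeff_toLaurent_mul]
  refine sum_congr rfl fun j _ => ?_
  rw [coeff_seqLaurent, mul_ite, mul_zero]
  exact if_congr (by omega) (by congr 3; omega) rfl

theorem coeff_solutionDefect_of_nonpos (n : ℕ) (s : ℕ → R) (φ ψ : R[X]) {c : ℤ} (hc : c ≤ 0) :
    (solutionDefect n s φ ψ).coeff c = (toLaurent φ * seqLaurent n s).coeff c := by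
  rw [solutionDefect, AddMonoidAlgebra.coeff_sub, Finsupp.sub_apply, coeff_T_one_mul_toLaurent,
    if_neg (by omega), sub_zero]

theorem annCond_iff_coeff_eq_zero {k N : ℕ} (hkN : k ≤ N) (s : ℕ → R) (φ : R[X]) :
    AnnCond k s φ ↔ ∀ c : ℤ, (φ.natDegree : ℤ) - k < c → c ≤ 0 →
      (toLaurent φ * seqLaurent N s).coeff c = 0 := by
  have hcoeff : ∀ t : ℕ, t + φ.natDegree + 1 ≤ k →
      (toLaurent φ * seqLaurent N s).coeff (-t) =
        ∑ j ∈ range (φ.natDegree + 1), φ.coeff j * s (t + j) := by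
    intro t ht
    rw [coeff_toLaurent_mul_seqLaurent]
    refine sum_congr rfl fun j hj => ?_
    rw [mem_range] at hj
    rw [if_pos (by omega)]
    congr 2
    omega
  constructor
  · intro h c hc hc₀
    rw [← neg_neg c, ← Int.toNat_of_nonneg (neg_nonneg.2 hc₀), hcoeff _ (by omega)]
    exact h _ (by omega)
  · intro h t ht
    rw [← hcoeff t ht]
    exact h _ (by omega) (by omega)

theorem disc_eq_coeff_toLaurent_mul_seqLaurent {k N : ℕ} (hkN : k < N) (s : ℕ → R) {φ : R[X]}
    (hdk : φ.natDegree ≤ k) :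
    disc s k φ = (toLaurent φ * seqLaurent N s).coeff ((φ.natDegree : ℤ) - k) := by
  rw [disc, coeff_toLaurent_mul_seqLaurent]
  refine sum_congr rfl fun j hj => ?_
  rw [mem_range] at hj
  exact if_congr (by omega) (by congr 3; omega) rfl

theorem IsSolution.coeff_solutionDefect_eq_zero {n : ℕ} {s : ℕ → R} {φ ψ : R[X]}
    (h : IsSolution n s φ ψ) {c : ℤ} (hc : (φ.natDegree : ℤ) - n < c) :
    (solutionDefect n s φ ψ).coeff c = 0 := by
  rcases le_or_gt c 0 with hc₀ | hc₀
  · rw [coeff_solutionDefect_of_nonpos _ _ _ _ hc₀]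
    exact (annCond_iff_coeff_eq_zero le_rfl s φ).1 h.1.2 c hc hc₀
  · rw [solutionDefect, AddMonoidAlgebra.coeff_sub, Finsupp.sub_apply, coeff_T_one_mul_toLaurent,
      if_pos hc₀, h.2, coeff_toLaurent_mul_seqLaurent, sub_eq_zero]
    exact sum_congr rfl fun j _ => if_congr (by omega) (by congr 3; omega) rfl

theorem mul_eq_mul_of_coeff_solutionDefect_eq_zero {n : ℕ} {s : ℕ → R} {f₁ f₂ g₁ g₂ : R[X]}
    (hf : ∀ c : ℤ, (f₁.natDegree : ℤ) - n < c → (solutionDefect n s f₁ f₂).coeff c = 0)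
    (hg : ∀ c : ℤ, (g₁.natDegree : ℤ) - n < c → (solutionDefect n s g₁ g₂).coeff c = 0)
    (hdeg : f₁.natDegree + g₁.natDegree ≤ n) :
    f₂ * g₁ = f₁ * g₂ := by
  have hT : T 1 * toLaurent (f₂ * g₁ - f₁ * g₂) =
      toLaurent f₁ * solutionDefect n s g₁ g₂ - toLaurent g₁ * solutionDefect n s f₁ f₂ := by
    simp only [solutionDefect, map_sub, map_mul]
    ring
  rw [← sub_eq_zero]
  ext k
  have hk := congrArg (fun f => f.coeff ((k : ℤ) + 1)) hT
  simp only [coeff_T_one_mul_toLaurent, AddMonoidAlgebra.coeff_sub, Finsupp.sub_apply,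
    coeff_toLaurent_mul] at hk
  rw [if_pos (by omega), show ((k : ℤ) + 1 - 1).toNat = k by omega] at hk
  rw [hk, coeff_zero, sum_eq_zero, sum_eq_zero, sub_zero]
  · intro j hj
    rw [mem_range] at hj
    rw [hf _ (by omega), mul_zero]
  · intro j hj
    rw [mem_range] at hj
    rw [hg _ (by omega), mul_zero]

theorem coeff_solutionDefect_sub_eq_zero {n : ℕ} {s : ℕ → R} {φ ψ φ' ψ' : R[X]} {a b : R}
    {α β : ℤ} {p q : ℕ}
    (hD : ∀ c, α < c → (solutionDefect n s φ ψ).coeff c = 0)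
    (hDα : (solutionDefect n s φ ψ).coeff α = a)
    (hD' : ∀ c, β < c → (solutionDefect n s φ' ψ').coeff c = 0)
    (hD'β : (solutionDefect n s φ' ψ').coeff β = b) (hpq : α + p = β + q)
    {c : ℤ} (hc : α + p ≤ c) :
    (solutionDefect n s (C b * X ^ p * φ - C a * X ^ q * φ')
      (C b * X ^ p * ψ - C a * X ^ q * ψ')).coeff c = 0 := by
  have hlin : solutionDefect n s (C b * X ^ p * φ - C a * X ^ q * φ')
      (C b * X ^ p * ψ - C a * X ^ q * ψ') =
      LaurentPolynomial.C b * T p * solutionDefect n s φ ψ -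
        LaurentPolynomial.C a * T q * solutionDefect n s φ' ψ' := by
    simp only [solutionDefect, map_sub, map_mul, toLaurent_C, toLaurent_X_pow]
    ring
  rw [hlin, AddMonoidAlgebra.coeff_sub, Finsupp.sub_apply, coeff_C_mul_T_mul, coeff_C_mul_T_mul]
  rcases hc.lt_or_eq with hc | rfl
  · rw [hD _ (by omega), hD' _ (by omega), mul_zero, mul_zero, sub_zero]
  · rw [add_sub_cancel_right, hDα, hpq, add_sub_cancel_right, hD'β, mul_comm, sub_self]

end Defect

section LinearComplexity

variable {R : Type*} [CommRing R]

theorem AnnCond.mono {n N : ℕ} {s : ℕ → R} {φ : R[X]} (h : AnnCond N s φ) (hn : n ≤ N) :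
    AnnCond n s φ :=
  fun t ht => h t (ht.trans hn)

theorem annihilates_X_pow [Nontrivial R] (n : ℕ) (s : ℕ → R) : Annihilates n s (X ^ n) :=
  ⟨(monic_X_pow n).ne_zero, fun t ht => by rw [natDegree_X_pow] at ht; omega⟩

theorem LC_le {n : ℕ} {s : ℕ → R} {φ : R[X]} (h : Annihilates n s φ) : LC n s ≤ φ.natDegree :=
  Nat.sInf_le ⟨φ, h, rfl⟩

theorem LC_le_self [Nontrivial R] (n : ℕ) (s : ℕ → R) : LC n s ≤ n :=
  (LC_le (annihilates_X_pow n s)).trans (natDegree_X_pow n).le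

theorem exists_annihilates_natDegree_eq_LC [Nontrivial R] (n : ℕ) (s : ℕ → R) :
    ∃ φ : R[X], Annihilates n s φ ∧ φ.natDegree = LC n s :=
  Nat.sInf_mem (s := {d | ∃ φ : R[X], Annihilates n s φ ∧ φ.natDegree = d})
    ⟨n, X ^ n, annihilates_X_pow n s, natDegree_X_pow n⟩

theorem LC_le_LC_succ [Nontrivial R] (n : ℕ) (s : ℕ → R) : LC n s ≤ LC (n + 1) s := by
  obtain ⟨φ, hφ, hdeg⟩ := exists_annihilates_natDegree_eq_LC (n + 1) s
  exact hdeg ▸ LC_le ⟨hφ.1, hφ.2.mono n.le_succ⟩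

theorem le_natDegree_add_natDegree_of_disc_ne_zero [IsDomain R] {k : ℕ} {s : ℕ → R}
    {φ g : R[X]} (hφ : AnnCond k s φ) (hdk : φ.natDegree ≤ k) (hΔ : disc s k φ ≠ 0)
    (hg : Annihilates (k + 1) s g) :
    k + 1 ≤ φ.natDegree + g.natDegree := by
  by_contra! hlt
  -- Massey's argument: the coefficient of `g φ s̄` in degree `deg φ + deg g - k` is
  -- `lc g · Δ` when read off `g · (φ s̄)`, and `0` when read off `φ · (g s̄)`.
  set c₀ : ℤ := φ.natDegree + g.natDegree - k
  have hφS := (annCond_iff_coeff_eq_zero k.le_succ s φ).1 hφ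
  have hgS := (annCond_iff_coeff_eq_zero le_rfl s g).1 hg.2
  have h₁ : (toLaurent g * (toLaurent φ * seqLaurent (k + 1) s)).coeff c₀ =
      g.leadingCoeff * disc s k φ := by
    rw [coeff_toLaurent_mul, sum_range_succ, sum_eq_zero, zero_add,
      disc_eq_coeff_toLaurent_mul_seqLaurent k.lt_succ_self s hdk]
    · congr 2
      ring
    · intro i hi
      rw [mem_range] at hi
      rw [hφS _ (by omega) (by omega), mul_zero]
  have h₂ : (toLaurent φ * (toLaurent g * seqLaurent (k + 1) s)).coeff c₀ = 0 := by
    rw [coeff_toLaurent_mul]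
    refine sum_eq_zero fun j hj => ?_
    rw [mem_range] at hj
    rw [hgS _ (by omega) (by omega), mul_zero]
  rw [mul_left_comm, h₂] at h₁
  exact mul_ne_zero (leadingCoeff_ne_zero.2 hg.1) hΔ h₁.symm

theorem le_natDegree_add_LC_of_disc_ne_zero [IsDomain R] {k : ℕ} {s : ℕ → R} {φ : R[X]}
    (hφ : AnnCond k s φ) (hdk : φ.natDegree ≤ k) (hΔ : disc s k φ ≠ 0) :
    k + 1 ≤ φ.natDegree + LC (k + 1) s := by
  obtain ⟨g, hg, hdeg⟩ := exists_annihilates_natDegree_eq_LC (k + 1) s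
  exact hdeg ▸ le_natDegree_add_natDegree_of_disc_ne_zero hφ hdk hΔ hg

end LinearComplexity

theorem natDegree_C_mul_X_pow_mul_sub {R : Type*} [CommRing R] [IsDomain R] {a : R} (b : R)
    {φ : R[X]} (ψ : R[X]) {p q : ℕ} (ha : a ≠ 0) (hφ : φ ≠ 0)
    (hlt : q + ψ.natDegree < p + φ.natDegree) :
    (C a * X ^ p * φ - C b * X ^ q * ψ).natDegree = p + φ.natDegree := by
  have hlead : (C a * X ^ p * φ).natDegree = p + φ.natDegree := by
    rw [natDegree_mul (mul_ne_zero (C_ne_zero.2 ha) (pow_ne_zero _ X_ne_zero)) hφ,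
      natDegree_C_mul_X_pow _ _ ha]
  have hrest : (C b * X ^ q * ψ).natDegree ≤ q + ψ.natDegree :=
    natDegree_mul_le.trans (Nat.add_le_add_right (natDegree_C_mul_X_pow_le b q) _)
  rw [natDegree_sub_eq_left_of_natDegree_lt (by omega), hlead]

section Algorithm

variable {R : Type*} [CommRing R]

/-- The index `m` of the last nonzero discrepancy is eliminated through
`deg μ₁ + deg μ'₁ = m + 1`: the defect of `μ'` is controlled above `deg μ'₁ - m = 1 - deg μ₁`. -/
structure BMInvariant (n k : ℕ) (s : ℕ → R) (st : BMState R) : Prop where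
  mu_ne_zero : st.mu.1 ≠ 0
  natDegree_mu_le : st.mu.1.natDegree ≤ LC k s
  coeff_defect_mu : ∀ c : ℤ, (st.mu.1.natDegree : ℤ) - k < c →
    (solutionDefect n s st.mu.1 st.mu.2).coeff c = 0
  coeff_defect_mu' : ∀ c : ℤ, 1 - (st.mu.1.natDegree : ℤ) < c →
    (solutionDefect n s st.mu'.1 st.mu'.2).coeff c = 0
  coeff_defect_mu'_eq :
    (solutionDefect n s st.mu'.1 st.mu'.2).coeff (1 - st.mu.1.natDegree) = st.dp
  natDegree_add_le : st.mu.1.natDegree + st.mu'.1.natDegree ≤ k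
  e_eq : st.e = k + 1 - 2 * (st.mu.1.natDegree : ℤ)
  dp_ne_zero : st.dp ≠ 0
  nabla_ne_zero : st.nabla ≠ 0
  det_eq : st.mu.2 * st.mu'.1 - st.mu.1 * st.mu'.2 = C st.nabla

variable {n k : ℕ} {s : ℕ → R} {st : BMState R}

theorem BMInvariant.coeff_defect_mu_eq (h : BMInvariant n k s st) (hk : k < n) :
    (solutionDefect n s st.mu.1 st.mu.2).coeff ((st.mu.1.natDegree : ℤ) - k) =
      disc s k st.mu.1 := by
  have hdk := h.natDegree_add_le
  rw [coeff_solutionDefect_of_nonpos _ _ _ _ (by omega),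
    disc_eq_coeff_toLaurent_mul_seqLaurent hk s (by omega)]

theorem BMInvariant.annCond_mu (h : BMInvariant n k s st) (hk : k ≤ n) : AnnCond k s st.mu.1 :=
  (annCond_iff_coeff_eq_zero hk s _).2 fun c hc hc₀ => by
    rw [← coeff_solutionDefect_of_nonpos n s _ st.mu.2 hc₀]
    exact h.coeff_defect_mu c hc

variable [DecidableEq R]

theorem bmInvariant_bmRun_zero [Nontrivial R] : BMInvariant n 0 s (bmRun s 0) where
  mu_ne_zero := one_ne_zero
  natDegree_mu_le := by simp [bmRun]
  coeff_defect_mu c hc := by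
    simp only [bmRun, natDegree_one, CharP.cast_eq_zero, sub_zero] at hc
    simp [bmRun, solutionDefect, coeff_seqLaurent, hc.not_ge]
  coeff_defect_mu' c hc := by
    simp only [bmRun, natDegree_one, CharP.cast_eq_zero, sub_zero] at hc
    simp only [bmRun, solutionDefect, map_zero, zero_mul, map_neg, toLaurent_one, mul_neg,
      mul_one, sub_neg_eq_add, zero_add, LaurentPolynomial.T_apply, ite_eq_right_iff,
      one_ne_zero, imp_false]
    omega
  coeff_defect_mu'_eq := by simp [bmRun, solutionDefect]
  natDegree_add_le := by simp [bmRun]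
  e_eq := by simp [bmRun]
  dp_ne_zero := one_ne_zero
  nabla_ne_zero := one_ne_zero
  det_eq := by simp [bmRun]

theorem BMInvariant.bmStep_of_disc_eq_zero [Nontrivial R] (h : BMInvariant n k s st)
    (hk : k < n) (hΔ : disc s k st.mu.1 = 0) : BMInvariant n (k + 1) s (bmStep s k st) := by
  simp only [bmStep, hΔ, ↓reduceIte]
  exact
  { h with
    natDegree_mu_le := h.natDegree_mu_le.trans (LC_le_LC_succ k s)
    coeff_defect_mu := fun c hc => by
      rcases (show (st.mu.1.natDegree : ℤ) - k ≤ c by push_cast at hc; omega).lt_or_eq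
        with hc | rfl
      · exact h.coeff_defect_mu c hc
      · rw [h.coeff_defect_mu_eq hk, hΔ]
    natDegree_add_le := h.natDegree_add_le.trans k.le_succ
    e_eq := by rw [h.e_eq]; push_cast; ring }

variable [IsDomain R]

theorem BMInvariant.bmStep_of_e_nonpos (h : BMInvariant n k s st) (hk : k < n)
    (hΔ : disc s k st.mu.1 ≠ 0) (he : st.e ≤ 0) : BMInvariant n (k + 1) s (bmStep s k st) := by
  have hdd' := h.natDegree_add_le
  have hE : ((-st.e).toNat : ℤ) = 2 * st.mu.1.natDegree - k - 1 := by have := h.e_eq; omega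
  have hdeg : (C st.dp * st.mu.1 -
      C (disc s k st.mu.1) * X ^ (-st.e).toNat * st.mu'.1).natDegree = st.mu.1.natDegree := by
    simpa using natDegree_C_mul_X_pow_mul_sub (p := 0) (disc s k st.mu.1) st.mu'.1
      h.dp_ne_zero h.mu_ne_zero (by omega)
  simp only [bmStep, hΔ, he, ↓reduceIte]
  exact {
    mu_ne_zero := ne_zero_of_natDegree_gt (n := 0) (by dsimp only; omega)
    natDegree_mu_le := by
      dsimp only
      rw [hdeg]
      exact h.natDegree_mu_le.trans (LC_le_LC_succ k s)
    coeff_defect_mu := fun c hc => by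
      dsimp only at hc ⊢
      rw [hdeg] at hc
      simpa using coeff_solutionDefect_sub_eq_zero (p := 0) h.coeff_defect_mu
        (h.coeff_defect_mu_eq hk) h.coeff_defect_mu' h.coeff_defect_mu'_eq
        (by omega) (c := c) (by push_cast at hc; omega)
    coeff_defect_mu' := by dsimp only; rw [hdeg]; exact h.coeff_defect_mu'
    coeff_defect_mu'_eq := by dsimp only; rw [hdeg]; exact h.coeff_defect_mu'_eq
    natDegree_add_le := by dsimp only; omega
    e_eq := by dsimp only; rw [hdeg, h.e_eq]; push_cast; ring
    dp_ne_zero := h.dp_ne_zero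
    nabla_ne_zero := mul_ne_zero h.dp_ne_zero h.nabla_ne_zero
    det_eq := by dsimp only; rw [C_mul]; linear_combination C st.dp * h.det_eq }

theorem BMInvariant.bmStep_of_e_pos (h : BMInvariant n k s st) (hk : k < n)
    (hΔ : disc s k st.mu.1 ≠ 0) (he : 0 < st.e) : BMInvariant n (k + 1) s (bmStep s k st) := by
  have hdd' := h.natDegree_add_le
  have hE : (st.e.toNat : ℤ) = k + 1 - 2 * st.mu.1.natDegree := by have := h.e_eq; omega
  have hdeg : (C st.dp * X ^ st.e.toNat * st.mu.1 -
      C (disc s k st.mu.1) * st.mu'.1).natDegree = st.e.toNat + st.mu.1.natDegree := by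
    simpa using natDegree_C_mul_X_pow_mul_sub (q := 0) (disc s k st.mu.1) st.mu'.1
      h.dp_ne_zero h.mu_ne_zero (by omega)
  have hLC := le_natDegree_add_LC_of_disc_ne_zero (h.annCond_mu hk.le) (by omega) hΔ
  simp only [bmStep, hΔ, he.not_ge, ↓reduceIte]
  exact {
    mu_ne_zero := ne_zero_of_natDegree_gt (n := 0) (by dsimp only; omega)
    natDegree_mu_le := by dsimp only; omega
    coeff_defect_mu := fun c hc => by
      dsimp only at hc ⊢
      rw [hdeg] at hc
      simpa using coeff_solutionDefect_sub_eq_zero (q := 0) h.coeff_defect_mu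
        (h.coeff_defect_mu_eq hk) h.coeff_defect_mu' h.coeff_defect_mu'_eq
        (by omega) (c := c) (by push_cast at hc; omega)
    coeff_defect_mu' := fun c hc => by
      dsimp only at hc
      rw [hdeg] at hc
      exact h.coeff_defect_mu c (by push_cast at hc; omega)
    coeff_defect_mu'_eq := by
      dsimp only
      rw [hdeg, ← h.coeff_defect_mu_eq hk]
      congr 1
      push_cast
      omega
    natDegree_add_le := by dsimp only; omega
    e_eq := by dsimp only; rw [hdeg]; push_cast; omega
    dp_ne_zero := hΔ
    nabla_ne_zero := mul_ne_zero hΔ h.nabla_ne_zero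
    det_eq := by dsimp only; rw [C_mul]; linear_combination C (disc s k st.mu.1) * h.det_eq }

theorem BMInvariant.bmStep (h : BMInvariant n k s st) (hk : k < n) :
    BMInvariant n (k + 1) s (bmStep s k st) := by
  by_cases hΔ : disc s k st.mu.1 = 0
  · exact h.bmStep_of_disc_eq_zero hk hΔ
  rcases le_or_gt st.e 0 with he | he
  · exact h.bmStep_of_e_nonpos hk hΔ he
  · exact h.bmStep_of_e_pos hk hΔ he

theorem bmInvariant_bmRun (hk : k ≤ n) : BMInvariant n k s (bmRun s k) := by
  induction k with
  | zero => exact bmInvariant_bmRun_zero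
  | succ k ih => exact (ih (by omega)).bmStep (by omega)

end Algorithm

theorem isUnit_of_isCoprime_of_C_mul_eq {F : Type*} [Field F] {f₁ f₂ μ₁ μ₂ m : F[X]} {c : F}
    (hc : c ≠ 0) (hcop : IsCoprime f₁ f₂) (h₁ : C c * f₁ = m * μ₁) (h₂ : C c * f₂ = m * μ₂) :
    IsUnit m := by
  obtain ⟨a, b, hab⟩ := hcop
  have hdvd : m ∣ C c := ⟨a * μ₁ + b * μ₂, by linear_combination (-C c) * hab + a * h₁ + b * h₂⟩
  exact isUnit_of_dvd_unit hdvd (isUnit_C.2 hc.isUnit)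

open Polynomial in
theorem minimal_of_coprime_solution_general {F : Type*} [Field F] [DecidableEq F]
    (n : ℕ) (s : ℕ → F)
    (f₁ f₂ : Polynomial F) (hf : IsSolution n s f₁ f₂)
    (hdeg : f₁.natDegree ≤ n - LC n s) (hcop : IsCoprime f₁ f₂) :
    f₁.natDegree = LC n s ∧
      (∃ c : F, c ≠ 0 ∧ f₂ * (bmRun s n).mu'.1 - f₁ * (bmRun s n).mu'.2 = C c) ∧
      C (bmRun s n).nabla * f₁ =
        (f₂ * (bmRun s n).mu'.1 - f₁ * (bmRun s n).mu'.2) * (bmRun s n).mu.1 ∧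
      C (bmRun s n).nabla * f₂ =
        (f₂ * (bmRun s n).mu'.1 - f₁ * (bmRun s n).mu'.2) * (bmRun s n).mu.2 := by
  have h : BMInvariant n n s (bmRun s n) := bmInvariant_bmRun le_rfl
  set μ := (bmRun s n).mu
  set μ' := (bmRun s n).mu'
  have hμ : μ.1.natDegree ≤ LC n s := h.natDegree_mu_le
  have hcross : f₂ * μ.1 = f₁ * μ.2 :=
    mul_eq_mul_of_coeff_solutionDefect_eq_zero (fun _ hc => hf.coeff_solutionDefect_eq_zero hc)
      h.coeff_defect_mu (by have := LC_le_self n s; omega)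
  have h₁ : C (bmRun s n).nabla * f₁ = (f₂ * μ'.1 - f₁ * μ'.2) * μ.1 := by
    linear_combination (-f₁) * h.det_eq - μ'.1 * hcross
  have h₂ : C (bmRun s n).nabla * f₂ = (f₂ * μ'.1 - f₁ * μ'.2) * μ.2 := by
    linear_combination (-f₂) * h.det_eq - μ'.2 * hcross
  obtain ⟨a, ha, hm⟩ := isUnit_iff.1 (isUnit_of_isCoprime_of_C_mul_eq h.nabla_ne_zero hcop h₁ h₂)
  have hdeg_eq := congrArg natDegree h₁
  rw [natDegree_C_mul h.nabla_ne_zero, ← hm, natDegree_C_mul ha.ne_zero] at hdeg_eq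
  exact ⟨le_antisymm (hdeg_eq ▸ hμ) (LC_le hf.1), ⟨a, ha.ne_zero, hm.symm⟩, h₁, h₂⟩

open Polynomial in
/-- If `2L ≤ n`, `f` is a solution for `s` with `deg f₁ ≤ n − L` and
`gcd(f₁,f₂) = 1`, then `f₁` is a minimal polynomial of `s`; in fact
`∇ₛ f = m' μ` with `m' ∈ F^×`. -/
theorem minimal_of_coprime_solution {F : Type*} [Field F] [DecidableEq F]
    (n : ℕ) (hn : 1 ≤ n) (s : ℕ → F) (h2L : 2 * LC n s ≤ n)
    (f₁ f₂ : Polynomial F) (hf : IsSolution n s f₁ f₂)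
    (hdeg : f₁.natDegree ≤ n - LC n s) (hcop : IsCoprime f₁ f₂) :
    f₁.natDegree = LC n s ∧
      (∃ c : F, c ≠ 0 ∧ f₂ * (bmRun s n).mu'.1 - f₁ * (bmRun s n).mu'.2 = C c) ∧
      C (bmRun s n).nabla * f₁ =
        (f₂ * (bmRun s n).mu'.1 - f₁ * (bmRun s n).mu'.2) * (bmRun s n).mu.1 ∧
      C (bmRun s n).nabla * f₂ =
        (f₂ * (bmRun s n).mu'.1 - f₁ * (bmRun s n).mu'.2) * (bmRun s n).mu.2 :=
  minimal_of_coprime_solution_general n s f₁ f₂ hf hdeg hcop
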